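/- Let p > τ > 0, r, d, k, M, μ₁, μ₂, q > 0 with r d > μ₁/q. The function V(z) = (p − τ)(r d − μ₁/q) z / (r d k z/M + μ₂) − τ z is strictly concave on [0, ∞), and its unique stationary point is z* = M(−μ₂ + √((p−τ)(r d − μ₁/q) μ₂ / τ)) / (r d k); moreover if (p−τ)(rd − μ₁/q) > τ μ₂ then z* > 0 and z* is the global maximizer of V on [0,∞). -/

import Mathlib

/-!
With `A = (p - τ)(rd - μ₁/q)`, `B = rdk/M` and `c = μ₂`, the utility is `V z = A z / (B z + c) - τ z`.
Its derivative `A c / (B z + c)² - τ` is strictly decreasing wherever the denominator `w = B z + c`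
is positive, so `V` is strictly concave there, and it vanishes exactly when `w = √(A c / τ)`.
Global maximality is AM–GM in `w`: with `s = √(A c / τ)`, `V z* - V z = τ (s - w)² / (B w)`.
-/

open Set

noncomputable def utility (A B c τ z : ℝ) : ℝ := A * z / (B * z + c) - τ * z

noncomputable def stationaryPoint (A B c τ : ℝ) : ℝ := (√(A * c / τ) - c) / B

section

variable {A B c τ z : ℝ}

theorem hasDerivAt_utility (hw : B * z + c ≠ 0) :
    HasDerivAt (utility A B c τ) (A * c / (B * z + c) ^ 2 - τ) z := by
  have hnum : HasDerivAt (fun z => A * z) A z := by simpa using (hasDerivAt_id z).const_mul A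
  have hden : HasDerivAt (fun z => B * z + c) B z := by
    simpa using ((hasDerivAt_id z).const_mul B).add_const c
  have hcost : HasDerivAt (fun z => τ * z) τ z := by simpa using (hasDerivAt_id z).const_mul τ
  exact ((hnum.div hden hw).sub hcost).congr_deriv (by ring)

theorem neg_div_lt_iff_pos_add (hB : 0 < B) : -c / B < z ↔ 0 < B * z + c := by
  rw [div_lt_iff₀ hB]
  constructor <;> intro h <;> linarith

theorem strictConcaveOn_utility (hAc : 0 < A * c) (hB : 0 < B) :
    StrictConcaveOn ℝ (Ioi (-c / B)) (utility A B c τ) := by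
  have hw : ∀ z ∈ Ioi (-c / B), 0 < B * z + c := fun z hz => (neg_div_lt_iff_pos_add hB).1 hz
  have hderiv : ∀ z ∈ Ioi (-c / B), deriv (utility A B c τ) z = A * c / (B * z + c) ^ 2 - τ :=
    fun z hz => (hasDerivAt_utility (hw z hz).ne').deriv
  refine StrictAntiOn.strictConcaveOn_of_deriv (convex_Ioi _)
    (fun z hz => (hasDerivAt_utility (hw z hz).ne').continuousAt.continuousWithinAt) ?_
  rw [interior_Ioi]
  intro x hx y hy hxy
  rw [hderiv x hx, hderiv y hy, sub_lt_sub_iff_right]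
  have hwx := hw x hx
  exact div_lt_div_of_pos_left hAc (by positivity) (by gcongr)

theorem denom_stationaryPoint (hB : B ≠ 0) :
    B * stationaryPoint A B c τ + c = √(A * c / τ) := by
  rw [stationaryPoint]
  field_simp
  ring

theorem deriv_utility_eq_zero_iff (hB : B ≠ 0) (hτ : τ ≠ 0) (hw : 0 < B * z + c) :
    deriv (utility A B c τ) z = 0 ↔ z = stationaryPoint A B c τ :=
  calc deriv (utility A B c τ) z = 0 ↔ (B * z + c) * (B * z + c) = A * c / τ := by
        rw [(hasDerivAt_utility hw.ne').deriv, sub_eq_zero, div_eq_iff (by positivity),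
          eq_div_iff hτ]
        constructor <;> intro h <;> linarith
    _ ↔ B * stationaryPoint A B c τ + c = B * z + c := by
        rw [denom_stationaryPoint hB, Real.sqrt_eq_iff_mul_self_eq_of_pos hw]
    _ ↔ z = stationaryPoint A B c τ := by
        rw [add_left_inj, mul_right_inj' hB, eq_comm]

theorem stationaryPoint_pos (hB : 0 < B) (hc : 0 < c) (hτ : 0 < τ) (h : τ * c < A) :
    0 < stationaryPoint A B c τ := by
  have : c < √(A * c / τ) := by
    rw [Real.lt_sqrt hc.le, lt_div_iff₀ hτ]
    nlinarith
  exact div_pos (by linarith) hB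

theorem utility_le_utility_stationaryPoint (hA : 0 < A) (hB : 0 < B) (hc : 0 < c) (hτ : 0 < τ)
    (hw : 0 < B * z + c) : utility A B c τ z ≤ utility A B c τ (stationaryPoint A B c τ) := by
  have hs : 0 < √(A * c / τ) := by positivity
  have hA_eq : A = τ * √(A * c / τ) ^ 2 / c := by
    rw [Real.sq_sqrt (by positivity)]
    field_simp
  have hsp : stationaryPoint A B c τ = (√(A * c / τ) - c) / B := rfl
  have key : utility A B c τ (stationaryPoint A B c τ) - utility A B c τ z
      = τ * (√(A * c / τ) - (B * z + c)) ^ 2 / (B * (B * z + c)) := by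
    rw [utility, utility, denom_stationaryPoint hB.ne', hsp]
    generalize √(A * c / τ) = s at hs hA_eq ⊢
    subst hA_eq
    field_simp
    ring
  have : 0 ≤ τ * (√(A * c / τ) - (B * z + c)) ^ 2 / (B * (B * z + c)) := by positivity
  linarith

end

theorem optimal_deployment_general
    (p τ r d k M μ₁ μ₂ q : ℝ)
    (hpτ : τ < p) (hτ : 0 < τ) (hr : 0 < r) (hd : 0 < d) (hk : 0 < k) (hM : 0 < M)
    (hμ₂ : 0 < μ₂) (hrd : μ₁ / q < r * d) :
    let V : ℝ → ℝ := fun z =>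
      (p - τ) * (r * d - μ₁ / q) * z / (r * d * k * z / M + μ₂) - τ * z
    let zstar := M * (-μ₂ + Real.sqrt ((p - τ) * (r * d - μ₁ / q) * μ₂ / τ)) / (r * d * k)
    StrictConcaveOn ℝ (Set.Ici 0) V ∧
      deriv V zstar = 0 ∧ (∀ z : ℝ, 0 ≤ z → deriv V z = 0 → z = zstar) ∧
      ((p - τ) * (r * d - μ₁ / q) > τ * μ₂ →
        0 < zstar ∧ ∀ z : ℝ, 0 ≤ z → V z ≤ V zstar) := by
  intro V zstar
  have hA : 0 < (p - τ) * (r * d - μ₁ / q) := mul_pos (by linarith) (by linarith)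
  have hB : 0 < r * d * k / M := by positivity
  have hV : V = utility ((p - τ) * (r * d - μ₁ / q)) (r * d * k / M) μ₂ τ := by
    funext z
    simp only [V, utility, div_mul_eq_mul_div]
  have hzstar : zstar = stationaryPoint ((p - τ) * (r * d - μ₁ / q)) (r * d * k / M) μ₂ τ := by
    simp only [zstar, stationaryPoint]
    field_simp
    ring
  have hw : ∀ z : ℝ, 0 ≤ z → 0 < r * d * k / M * z + μ₂ := fun z hz => by positivity
  rw [hV, hzstar]
  refine ⟨(strictConcaveOn_utility (mul_pos hA hμ₂) hB).subset
      (fun z hz => (neg_div_lt_iff_pos_add hB).2 (hw z hz)) (convex_Ici 0),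
    (deriv_utility_eq_zero_iff hB.ne' hτ.ne' ?_).2 rfl,
    fun z hz => (deriv_utility_eq_zero_iff hB.ne' hτ.ne' (hw z hz)).1,
    fun h => ⟨stationaryPoint_pos hB hμ₂ hτ h,
      fun z hz => utility_le_utility_stationaryPoint hA hB hμ₂ hτ (hw z hz)⟩⟩
  rw [denom_stationaryPoint hB.ne']
  positivity

/-- The honeypot operator's utility V is strictly concave on [0,∞), z* is its unique
stationary point, and z* is positive and globally maximizing when
(p−τ)(rd − μ₁/q) > τμ₂. -/
theorem optimal_deployment
    (p τ r d k M μ₁ μ₂ q : ℝ)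
    (hpτ : τ < p) (hτ : 0 < τ) (hr : 0 < r) (hd : 0 < d) (hk : 0 < k) (hM : 0 < M)
    (hμ₁ : 0 < μ₁) (hμ₂ : 0 < μ₂) (hq : 0 < q) (hrd : μ₁ / q < r * d) :
    let V : ℝ → ℝ := fun z =>
      (p - τ) * (r * d - μ₁ / q) * z / (r * d * k * z / M + μ₂) - τ * z
    let zstar := M * (-μ₂ + Real.sqrt ((p - τ) * (r * d - μ₁ / q) * μ₂ / τ)) / (r * d * k)
    StrictConcaveOn ℝ (Set.Ici 0) V ∧
      deriv V zstar = 0 ∧ (∀ z : ℝ, 0 ≤ z → deriv V z = 0 → z = zstar) ∧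
      ((p - τ) * (r * d - μ₁ / q) > τ * μ₂ →
        0 < zstar ∧ ∀ z : ℝ, 0 ≤ z → V z ≤ V zstar) :=
  optimal_deployment_general p τ r d k M μ₁ μ₂ q hpτ hτ hr hd hk hM hμ₂ hrd
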